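/- arXiv:0811.1649 — 3 statements merged into one kernel-verified Lean document; each statement's English description precedes it below -/
import Mathlib

section
/- For every n ≥ 1, the function f : [0,1/4] → [0,1] given by f(ε) = localPart(P^{n,ε}), the local part of n isotropic ε-PRBs, is continuous; moreover, there exist a finite partition of [0,1/4] into intervals I₁,…,I_m and real polynomials p₁,…,p_m each of degree at most n such that f(ε) = p_i(ε) whenever ε ∈ I_i. -/
open Finset

/-- n-bit strings. -/
abbrev Bits (n : ℕ) := Fin n → Bool

/-- A bipartite conditional "box" on n-bit alphabets: `P x y u v` is the
probability of outputs `(x, y)` given inputs `(u, v)`. -/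
abbrev Box (n : ℕ) := Bits n → Bits n → Bits n → Bits n → ℝ

/-- `P` is a bipartite conditional probability distribution. -/
def IsBox {n : ℕ} (P : Box n) : Prop :=
  (∀ x y u v, 0 ≤ P x y u v) ∧
  (∀ u v, ∑ x : Bits n, ∑ y : Bits n, P x y u v = 1)

/-- `P` is non-signalling. -/
def NonSignalling {n : ℕ} (P : Box n) : Prop :=
  (∀ y v u u', ∑ x : Bits n, P x y u v = ∑ x : Bits n, P x y u' v) ∧
  (∀ x u v v', ∑ y : Bits n, P x y u v = ∑ y : Bits n, P x y u v')

/-- The local deterministic box given by response functions `f` (Alice) and `g` (Bob). -/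
def detBox {n : ℕ} (f g : Bits n → Bits n) : Box n :=
  fun x y u v => if x = f u ∧ y = g v then 1 else 0

/-- `P` is local deterministic. -/
def IsLocalDet {n : ℕ} (P : Box n) : Prop :=
  ∃ f g : Bits n → Bits n, P = detBox f g

/-- `P` is local: a convex combination of local deterministic boxes. -/
def IsLocal {n : ℕ} (P : Box n) : Prop :=
  ∃ w : (Bits n → Bits n) × (Bits n → Bits n) → ℝ,
    (∀ fg, 0 ≤ w fg) ∧ (∑ fg, w fg = 1) ∧
    (∀ x y u v, P x y u v =
      ∑ fg : (Bits n → Bits n) × (Bits n → Bits n), w fg * detBox fg.1 fg.2 x y u v)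

/-- The local part of `P`: the maximal weight `p` such that `P` is a convex
combination of a local box (weight `p`) and a non-signalling box (weight `1 - p`). -/
noncomputable def localPart {n : ℕ} (P : Box n) : ℝ :=
  sSup {p : ℝ | 0 ≤ p ∧ p ≤ 1 ∧
    ∃ PL PNS : Box n, IsBox PL ∧ IsLocal PL ∧ IsBox PNS ∧ NonSignalling PNS ∧
      ∀ x y u v, P x y u v = p * PL x y u v + (1 - p) * PNS x y u v}

/-- Single-copy isotropic ε-PRB entries. -/
noncomputable def isoPRB1 (ε : ℝ) (x y u v : Bool) : ℝ :=
  if xor x y = (u && v) then (1 - ε) / 2 else ε / 2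

/-- The system of n independent isotropic ε-PRBs. -/
noncomputable def isoPRB (n : ℕ) (ε : ℝ) : Box n :=
  fun x y u v => ∏ i : Fin n, isoPRB1 ε (x i) (y i) (u i) (v i)

/-- Single-copy maximally biased δ-PRB entries. -/
noncomputable def biasedPRB1 (δ : ℝ) (x y u v : Bool) : ℝ :=
  if u && v then
    match x, y with
    | false, false => 0
    | true,  false => 1 / 2 - δ / 2
    | false, true  => 1 / 2 + δ / 2
    | true,  true  => 0
  else
    match x, y with
    | false, false => 1 / 2 - δ / 2
    | true,  false => 0
    | false, true  => δ
    | true,  true  => 1 / 2 - δ / 2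

/-- The system of n independent maximally biased δ-PRBs. -/
noncomputable def biasedPRB (n : ℕ) (δ : ℝ) : Box n :=
  fun x y u v => ∏ i : Fin n, biasedPRB1 δ (x i) (y i) (u i) (v i)

/-!
The local part of a non-signalling box `P` is the value of the linear program maximising `∑ w`
over weights `w ≥ 0` on pairs of deterministic response functions with `∑ w • detBox ≤ P`.
Only the right-hand side `P` of its constraints varies, and the optimum is attained at a vertex,
which is determined by its set `S` of active constraints; so `localPart P = φ_S P` for one of
finitely many linear functionals `φ_S`. The entries of `P^{n,ε}` are polynomials of degree `n` in
`ε`, hence at every `ε` the local part equals one of finitely many polynomials of degree `≤ n`.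
A continuous function with this property is a single such polynomial between consecutive points
where two distinct polynomials of the family cross, which gives the partition into intervals.

Continuity: for `μ = min (ε / ε') ((1 - ε) / (1 - ε'))` every entry of `P^{1,ε}` dominates `μ`
times the corresponding entry of `P^{1,ε'}`, so `μ ^ n • P^{n,ε'} ≤ P^{n,ε}`, and a local part
survives such a domination up to the factor `μ ^ n`, which tends to `1` as `ε' → ε > 0`. At
`ε = 0` the CHSH inequality gives `localPart P^{n,ε} ≤ 4 ε`.
-/
section LinearProgram

lemma exists_linearMap_eq_of_injective {K V σ : Type*} [Field K] [AddCommGroup V] [Module K V]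
    (a : σ → V →ₗ[K] K) (c : V →ₗ[K] K) (S : Finset σ) :
    ∃ φ : (σ → K) →ₗ[K] K, (∀ d, (∀ s ∈ S, a s d = 0) → d = 0) →
      ∀ w b, (∀ s ∈ S, a s w = b s) → c w = φ b := by
  by_cases hinj : ∀ d, (∀ s ∈ S, a s d = 0) → d = 0
  · have hker : LinearMap.ker (LinearMap.pi fun s : S => a s) = ⊥ :=
      LinearMap.ker_eq_bot'.2 fun d hd => hinj d fun s hs => congrFun hd ⟨s, hs⟩
    obtain ⟨g, hg⟩ := LinearMap.exists_leftInverse_of_injective _ hker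
    refine ⟨c ∘ₗ g ∘ₗ LinearMap.funLeft K K Subtype.val, fun _ w b hwb => ?_⟩
    have hw : LinearMap.pi (fun s : S => a s) w = LinearMap.funLeft K K Subtype.val b :=
      funext fun s => hwb s s.2
    simp only [LinearMap.comp_apply, ← hw, ← LinearMap.comp_apply g, hg, LinearMap.id_apply]
  · exact ⟨0, fun h => absurd h hinj⟩

open Filter Topology

variable {E σ : Type*} [NormedAddCommGroup E] [NormedSpace ℝ E]

def polyhedron (a : σ → E →ₗ[ℝ] ℝ) (b : σ → ℝ) : Set E := {w | ∀ s, a s w ≤ b s}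

variable [Fintype σ]

noncomputable def activeSet (a : σ → E →ₗ[ℝ] ℝ) (b : σ → ℝ) (w : E) : Finset σ :=
  univ.filter fun s => a s w = b s

/-- Move from `w` along `d` as far as the polyhedron allows: the constraints active at `w` stay
tight, and at the stopping point a new one becomes active. -/
lemma exists_activeSet_ssubset {a : σ → E →ₗ[ℝ] ℝ} {b : σ → ℝ} (c : E →ₗ[ℝ] ℝ)
    (hF : IsCompact (polyhedron a b)) {w d : E} (hw : w ∈ polyhedron a b) (hd : d ≠ 0)
    (hda : ∀ s ∈ activeSet a b w, a s d = 0) (hcd : 0 ≤ c d) :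
    ∃ w' ∈ polyhedron a b, c w ≤ c w' ∧ activeSet a b w ⊂ activeSet a b w' := by
  set T := {t : ℝ | w + t • d ∈ polyhedron a b}
  have hT : IsCompact T :=
    ((Homeomorph.addLeft w).isClosedEmbedding.comp
      (isClosedEmbedding_smul_left hd)).isCompact_preimage hF
  have h0T : (0 : ℝ) ∈ T := by simpa [T] using hw
  obtain ⟨t, htT, htmax⟩ := hT.exists_isGreatest ⟨0, h0T⟩
  have happly : ∀ s r, a s (w + r • d) = a s w + r * a s d := by simp
  have hsub : activeSet a b w ⊆ activeSet a b (w + t • d) := by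
    intro s hs
    simp only [activeSet, mem_filter, mem_univ, true_and] at hs ⊢
    rw [happly, hda s (by simpa [activeSet] using hs), mul_zero, add_zero, hs]
  refine ⟨w + t • d, htT, ?_, hsub.ssubset_of_ne fun heq => ?_⟩
  · rw [map_add, map_smul, smul_eq_mul]
    exact le_add_of_nonneg_right (mul_nonneg (htmax h0T) hcd)
  have hev : ∀ᶠ r in 𝓝 t, r ∈ T := by
    simp only [T, polyhedron, Set.mem_ofPred_eq]
    refine Filter.eventually_all.2 fun s => ?_
    by_cases hs : s ∈ activeSet a b w
    · refine Filter.Eventually.of_forall fun r => ?_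
      rw [happly, hda s hs, mul_zero, add_zero]
      exact hw s
    · have hlt : a s (w + t • d) < b s := (htT s).lt_of_ne fun h =>
        hs (heq ▸ mem_filter.2 ⟨mem_univ _, h⟩)
      have hcont : Continuous fun r : ℝ => a s (w + r • d) := by simp only [happly]; fun_prop
      exact (hcont.continuousAt.eventually_lt continuousAt_const hlt).mono fun r hr => hr.le
  obtain ⟨r, hrT, hr⟩ := ((hev.filter_mono nhdsWithin_le_nhds).and
    (self_mem_nhdsWithin : Set.Ioi t ∈ 𝓝[>] t)).exists
  exact absurd (htmax hrT) (not_le.2 hr)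

/-- A maximiser with a maximal set of active constraints is a vertex: those constraints determine
it, so the optimal value is one of finitely many linear functions of the right-hand side `b`. -/
theorem exists_isGreatest_image_polyhedron (a : σ → E →ₗ[ℝ] ℝ) (c : E →L[ℝ] ℝ) :
    ∃ φ : Finset σ → (σ → ℝ) →ₗ[ℝ] ℝ, ∀ b : σ → ℝ, (polyhedron a b).Nonempty →
      IsCompact (polyhedron a b) → ∃ S, IsGreatest (c '' polyhedron a b) (φ S b) := by
  choose φ hφ using exists_linearMap_eq_of_injective a (c : E →ₗ[ℝ] ℝ)
  refine ⟨φ, fun b hne hF => ?_⟩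
  obtain ⟨w₀, hw₀, hmax₀⟩ := hF.exists_isMaxOn hne c.continuous.continuousOn
  obtain ⟨_, ⟨w, ⟨hw, hwmax⟩, rfl⟩, hSmax⟩ := wellFounded_gt.has_min
    (activeSet a b '' {w | w ∈ polyhedron a b ∧ IsMaxOn c (polyhedron a b) w})
    ⟨_, w₀, ⟨hw₀, hmax₀⟩, rfl⟩
  have hinj : ∀ d, (∀ s ∈ activeSet a b w, a s d = 0) → d = 0 := by
    intro d hd
    by_contra hd0
    obtain ⟨d', hd'0, hd'a, hcd'⟩ : ∃ d', d' ≠ 0 ∧ (∀ s ∈ activeSet a b w, a s d' = 0) ∧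
        0 ≤ c d' := by
      rcases le_total 0 (c d) with h | h
      · exact ⟨d, hd0, hd, h⟩
      · exact ⟨-d, neg_ne_zero.2 hd0, fun s hs => by simp [hd s hs], by simpa using h⟩
    obtain ⟨w', hw', hcw, hssub⟩ :=
      exists_activeSet_ssubset (c : E →ₗ[ℝ] ℝ) hF hw hd'0 hd'a hcd'
    exact hSmax _ ⟨w', ⟨hw', fun z hz => (hwmax hz).trans hcw⟩, rfl⟩ hssub
  have hval : c w = φ (activeSet a b w) b :=
    hφ _ hinj w b fun s hs => (mem_filter.1 hs).2
  refine ⟨activeSet a b w, ⟨w, hw, hval⟩, ?_⟩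
  rintro _ ⟨z, hz, rfl⟩
  exact hval ▸ hwmax hz

end LinearProgram

section PiecewisePolynomial

open Polynomial

def IsPiecewisePolynomialOn (f : ℝ → ℝ) (s : Set ℝ) (d : ℕ) : Prop :=
  ∃ (m : ℕ) (I : Fin m → Set ℝ) (q : Fin m → ℝ[X]),
    (∀ i, (I i).OrdConnected) ∧ (∀ i j, i ≠ j → Disjoint (I i) (I j)) ∧ (⋃ i, I i) = s ∧
      (∀ i, (q i).natDegree ≤ d) ∧ ∀ i, ∀ t ∈ I i, f t = (q i).eval t

namespace IsPiecewisePolynomialOn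

variable {f : ℝ → ℝ} {s s' : Set ℝ} {d : ℕ}

lemma of_fintype {ι : Type*} [Fintype ι] (I : ι → Set ℝ) (q : ι → ℝ[X])
    (hI : ∀ i, (I i).OrdConnected) (hdisj : Pairwise fun i j => Disjoint (I i) (I j))
    (hcover : (⋃ i, I i) = s) (hq : ∀ i, (q i).natDegree ≤ d)
    (hf : ∀ i, ∀ t ∈ I i, f t = (q i).eval t) : IsPiecewisePolynomialOn f s d := by
  set e := (Fintype.equivFin ι).symm
  exact ⟨_, I ∘ e, q ∘ e, fun i => hI _, fun i j hij => hdisj (e.injective.ne hij),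
    (e.surjective.iUnion_comp I).trans hcover, fun i => hq _, fun i => hf _⟩

lemma of_eqOn {q : ℝ[X]} (hs : s.OrdConnected) (hq : q.natDegree ≤ d)
    (hf : ∀ t ∈ s, f t = q.eval t) : IsPiecewisePolynomialOn f s d :=
  ⟨1, fun _ => s, fun _ => q, fun _ => hs, fun i j hij => absurd (Subsingleton.elim i j) hij,
    Set.iUnion_const s, fun _ => hq, fun _ => hf⟩

lemma singleton (t : ℝ) : IsPiecewisePolynomialOn f {t} d :=
  of_eqOn (q := C (f t)) Set.ordConnected_singleton (by simp) fun t' ht' => by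
    simp [Set.mem_singleton_iff.1 ht']

lemma union (h : IsPiecewisePolynomialOn f s d) (h' : IsPiecewisePolynomialOn f s' d)
    (hss' : Disjoint s s') : IsPiecewisePolynomialOn f (s ∪ s') d := by
  obtain ⟨m, I, q, hI, hdisj, rfl, hq, hf⟩ := h
  obtain ⟨m', I', q', hI', hdisj', rfl, hq', hf'⟩ := h'
  refine of_fintype (Sum.elim I I') (Sum.elim q q') (by rintro (i | i) <;> simp [hI, hI'])
    ?_ (by simp [Set.iUnion_sum]) (by rintro (i | i) <;> simp [hq, hq']) ?_
  · rintro (i | i) (j | j) hij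
    · exact hdisj i j fun h => hij (h ▸ rfl)
    · exact hss'.mono (Set.subset_iUnion I i) (Set.subset_iUnion I' j)
    · exact hss'.symm.mono (Set.subset_iUnion I' i) (Set.subset_iUnion I j)
    · exact hdisj' i j fun h => hij (h ▸ rfl)
  · rintro (i | i) t ht
    · exact hf i t ht
    · exact hf' i t ht

end IsPiecewisePolynomialOn

lemma exists_eqOn_of_isPreconnected {ι : Type*} [Finite ι] {f : ℝ → ℝ} {s : Set ℝ}
    {p : ι → ℝ[X]} (hs : IsPreconnected s) (hne : s.Nonempty) (hf : ContinuousOn f (closure s))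
    (hsel : ∀ t ∈ s, ∃ j, f t = (p j).eval t)
    (hsep : ∀ t ∈ s, ∀ j k, (p j).eval t = (p k).eval t → p j = p k) :
    ∃ j, ∀ t ∈ s, f t = (p j).eval t := by
  obtain ⟨t₀, ht₀⟩ := hne
  obtain ⟨j₀, hj₀⟩ := hsel t₀ ht₀
  set u : ι → Set ℝ := fun j => closure s ∩ (fun t => f t - (p j).eval t) ⁻¹' {0}
  have hu : ∀ j, IsClosed (u j) := fun j =>
    (hf.sub (p j).continuous.continuousOn).preimage_isClosed_of_isClosed isClosed_closure
      isClosed_singleton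
  have hmem : ∀ t ∈ s, ∀ j, t ∈ u j ↔ f t = (p j).eval t := fun t ht j => by
    simp [u, subset_closure ht, sub_eq_zero]
  set v := ⋃ j ∈ {j | p j ≠ p j₀}, u j
  have hv : IsClosed v := (Set.toFinite _).isClosed_biUnion fun j _ => hu j
  have hdisj : s ∩ (u j₀ ∩ v) = ∅ := by
    refine Set.eq_empty_of_forall_notMem fun t ⟨ht, htu, htv⟩ => ?_
    obtain ⟨j, hj, htj⟩ := Set.mem_iUnion₂.1 htv
    exact hj (hsep t ht j j₀ (((hmem t ht j).1 htj).symm.trans ((hmem t ht j₀).1 htu)))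
  have hcover : s ⊆ u j₀ ∪ v := fun t ht => by
    obtain ⟨j, hj⟩ := hsel t ht
    by_cases hjj : p j = p j₀
    · exact Or.inl ((hmem t ht j₀).2 (hjj ▸ hj))
    · exact Or.inr (Set.mem_iUnion₂.2 ⟨j, hjj, (hmem t ht j).2 hj⟩)
  rcases isPreconnected_iff_subset_of_disjoint_closed.1 hs _ _ (hu j₀) hv hcover hdisj with h | h
  · exact ⟨j₀, fun t ht => (hmem t ht j₀).1 (h ht)⟩
  · exact absurd hdisj (Set.nonempty_iff_ne_empty.1 ⟨t₀, ht₀, (hmem t₀ ht₀ j₀).2 hj₀, h ht₀⟩)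

lemma isPiecewisePolynomialOn_Ico_of_forall_Ioo {f : ℝ → ℝ} {d : ℕ} (R : Finset ℝ) :
    ∀ a b : ℝ, (∀ c e, a ≤ c → e ≤ b → (∀ r ∈ R, r ∉ Set.Ioo c e) →
      ∃ q : ℝ[X], q.natDegree ≤ d ∧ ∀ t ∈ Set.Ioo c e, f t = q.eval t) →
    IsPiecewisePolynomialOn f (Set.Ico a b) d := by
  induction R using Finset.induction_on with
  | empty =>
    intro a b h
    obtain ⟨q, hq, hfq⟩ := h a b le_rfl le_rfl (by simp)
    by_cases hab : a < b
    · rw [← Set.Ioo_insert_left hab, Set.insert_eq]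
      exact (IsPiecewisePolynomialOn.singleton a).union (.of_eqOn Set.ordConnected_Ioo hq hfq)
        (by simp)
    · rw [Set.Ico_eq_empty hab]
      exact .of_eqOn (q := 0) Set.ordConnected_empty (by simp) (by simp)
  | insert r R hrR ih =>
    intro a b h
    by_cases hr : r ∈ Set.Ioo a b
    · rw [← Set.Ico_union_Ico_eq_Ico hr.1.le hr.2.le]
      refine (ih a r fun c e hc he hce => h c e hc (he.trans hr.2.le) ?_).union
        (ih r b fun c e hc he hce => h c e (hr.1.le.trans hc) he ?_) Set.Ico_disjoint_Ico_same
      · exact Finset.forall_mem_insert _ _ _ |>.2 ⟨fun ht => (ht.2.trans_le he).false, hce⟩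
      · exact Finset.forall_mem_insert _ _ _ |>.2 ⟨fun ht => (ht.1.trans_le hc).false, hce⟩
    · exact ih a b fun c e hc he hce => h c e hc he <| Finset.forall_mem_insert _ _ _ |>.2
        ⟨fun ht => hr ⟨hc.trans_lt ht.1, ht.2.trans_le he⟩, hce⟩

theorem isPiecewisePolynomialOn_Icc {ι : Type*} [Fintype ι] {f : ℝ → ℝ} {a b : ℝ} {d : ℕ}
    (hab : a ≤ b) (hf : ContinuousOn f (Set.Icc a b)) (p : ι → ℝ[X])
    (hp : ∀ j, (p j).natDegree ≤ d) (hsel : ∀ t ∈ Set.Icc a b, ∃ j, f t = (p j).eval t) :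
    IsPiecewisePolynomialOn f (Set.Icc a b) d := by
  classical
  set R : Finset ℝ := (univ.filter fun jk : ι × ι => p jk.1 ≠ p jk.2).biUnion
    fun jk => (p jk.1 - p jk.2).roots.toFinset
  have hR : ∀ t j k, (p j).eval t = (p k).eval t → p j = p k ∨ t ∈ R := by
    intro t j k h
    refine or_iff_not_imp_left.2 fun hjk => Finset.mem_biUnion.2 ⟨(j, k), by simpa using hjk, ?_⟩
    simp [mem_roots (sub_ne_zero.2 hjk), h]
  have hIco := isPiecewisePolynomialOn_Ico_of_forall_Ioo (f := f) (d := d) R a b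
    fun c e hc he hce => by
      by_cases hce' : c < e
      · obtain ⟨j, hj⟩ := exists_eqOn_of_isPreconnected isPreconnected_Ioo (Set.nonempty_Ioo.2 hce')
          (hf.mono ((closure_Ioo hce'.ne).subset.trans (Set.Icc_subset_Icc hc he)))
          (fun t ht => hsel t ⟨hc.trans ht.1.le, ht.2.le.trans he⟩)
          (fun t ht j k h => (hR t j k h).resolve_right fun htR => hce t htR ht)
        exact ⟨p j, hp j, hj⟩
      · exact ⟨0, by simp, fun t ht => absurd (ht.1.trans ht.2) hce'⟩
  rw [← Set.Ico_insert_right hab, Set.insert_eq, Set.union_comm]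
  exact hIco.union (.singleton b) (Set.disjoint_singleton_right.2 fun h => h.2.false)

end PiecewisePolynomial

section Boxes

variable {n : ℕ}

abbrev LocalStrategy (n : ℕ) := (Bits n → Bits n) × (Bits n → Bits n)

def localBox (w : LocalStrategy n → ℝ) : Box n :=
  fun x y u v => ∑ fg, w fg * detBox fg.1 fg.2 x y u v

def localWeights (P : Box n) : Set (LocalStrategy n → ℝ) :=
  {w | (∀ fg, 0 ≤ w fg) ∧ ∀ x y u v, localBox w x y u v ≤ P x y u v}

lemma sum_sum_detBox (f g : Bits n → Bits n) (u v : Bits n) :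
    ∑ x, ∑ y, detBox f g x y u v = 1 := by
  simp [detBox, ite_and]

lemma sum_sum_localBox (w : LocalStrategy n → ℝ) (u v : Bits n) :
    ∑ x, ∑ y, localBox w x y u v = ∑ fg, w fg := by
  simp only [localBox]
  rw [Finset.sum_comm_cycle]
  simp only [← Finset.mul_sum, sum_sum_detBox, mul_one]

lemma localBox_nonneg {w : LocalStrategy n → ℝ} (hw : ∀ fg, 0 ≤ w fg) (x y u v : Bits n) :
    0 ≤ localBox w x y u v :=
  Finset.sum_nonneg fun fg _ => mul_nonneg (hw fg) (by unfold detBox; split <;> norm_num)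

lemma isBox_and_isLocal_localBox {w : LocalStrategy n → ℝ} (hw0 : ∀ fg, 0 ≤ w fg)
    (hw1 : ∑ fg, w fg = 1) :
    IsBox (localBox w) ∧ IsLocal (localBox w) :=
  ⟨⟨localBox_nonneg hw0, fun u v => (sum_sum_localBox w u v).trans hw1⟩, w, hw0, hw1,
    fun _ _ _ _ => rfl⟩

lemma localBox_smul (c : ℝ) (w : LocalStrategy n → ℝ) : localBox (c • w) = c • localBox w := by
  ext x y u v
  simp [localBox, Finset.mul_sum, mul_assoc]

lemma nonSignalling_localBox (w : LocalStrategy n → ℝ) : NonSignalling (localBox w) := by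
  have left : ∀ y u v, ∑ x, localBox w x y u v = ∑ fg, if y = fg.2 v then w fg else 0 := by
    intro y u v
    simp only [localBox]
    rw [Finset.sum_comm]
    simp [detBox, ite_and]
  have right : ∀ x u v, ∑ y, localBox w x y u v = ∑ fg, if x = fg.1 u then w fg else 0 := by
    intro x u v
    simp only [localBox]
    rw [Finset.sum_comm]
    simp [detBox, ite_and]
  exact ⟨fun y v u u' => by rw [left, left], fun x u v v' => by rw [right, right]⟩

lemma NonSignalling.sub {P Q : Box n} (hP : NonSignalling P) (hQ : NonSignalling Q) :
    NonSignalling (P - Q) := by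
  constructor
  · intro y v u u'
    simp only [Pi.sub_apply, Finset.sum_sub_distrib, hP.1 y v u u', hQ.1 y v u u']
  · intro x u v v'
    simp only [Pi.sub_apply, Finset.sum_sub_distrib, hP.2 x u v v', hQ.2 x u v v']

lemma NonSignalling.smul {P : Box n} (hP : NonSignalling P) (c : ℝ) : NonSignalling (c • P) := by
  constructor
  · intro y v u u'
    simp only [Pi.smul_apply, smul_eq_mul, ← Finset.mul_sum, hP.1 y v u u']
  · intro x u v v'
    simp only [Pi.smul_apply, smul_eq_mul, ← Finset.mul_sum, hP.2 x u v v']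

lemma isBox_inv_smul {Q : Box n} {c : ℝ} (hc : 0 < c) (hQ : ∀ x y u v, 0 ≤ Q x y u v)
    (hsum : ∀ u v, ∑ x, ∑ y, Q x y u v = c) : IsBox (c⁻¹ • Q) := by
  refine ⟨fun x y u v => mul_nonneg (inv_nonneg.2 hc.le) (hQ x y u v), fun u v => ?_⟩
  simp only [Pi.smul_apply, smul_eq_mul, ← Finset.mul_sum, hsum u v, inv_mul_cancel₀ hc.ne']

lemma sum_le_one_of_mem_localWeights {P : Box n} (hP : IsBox P) {w : LocalStrategy n → ℝ}
    (hw : w ∈ localWeights P) : ∑ fg, w fg ≤ 1 := by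
  rw [← sum_sum_localBox w default default, ← hP.2 default default]
  exact Finset.sum_le_sum fun x _ => Finset.sum_le_sum fun y _ => hw.2 x y _ _

lemma eq_localBox_of_sum_eq_one {P : Box n} (hP : IsBox P) {w : LocalStrategy n → ℝ}
    (hw : w ∈ localWeights P) (h1 : ∑ fg, w fg = 1) : P = localBox w := by
  ext x y u v
  have hslack : ∀ x y, 0 ≤ P x y u v - localBox w x y u v := fun x y =>
    sub_nonneg.2 (hw.2 x y u v)
  have hzero : ∑ x, ∑ y, (P x y u v - localBox w x y u v) = 0 := by
    simp only [Finset.sum_sub_distrib, hP.2 u v, sum_sum_localBox, h1, sub_self]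
  rw [Fintype.sum_eq_zero_iff_of_nonneg fun x => Finset.sum_nonneg fun y _ => hslack x y] at hzero
  have := (Fintype.sum_eq_zero_iff_of_nonneg (hslack x)).1 (congrFun hzero x)
  exact sub_eq_zero.1 (congrFun this y)

end Boxes

section LocalPart

variable {n : ℕ}

lemma mem_localWeights_of_decomposition {P PL PNS : Box n} {p : ℝ} (hp0 : 0 ≤ p) (hp1 : p ≤ 1)
    (hL : IsLocal PL) (hPNS : ∀ x y u v, 0 ≤ PNS x y u v)
    (hP : ∀ x y u v, P x y u v = p * PL x y u v + (1 - p) * PNS x y u v) :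
    ∃ w ∈ localWeights P, ∑ fg, w fg = p := by
  obtain ⟨ω, hω0, hω1, hPL⟩ := hL
  refine ⟨p • ω, ⟨fun fg => mul_nonneg hp0 (hω0 fg), fun x y u v => ?_⟩, ?_⟩
  · have hPL' : localBox ω x y u v = PL x y u v := (hPL x y u v).symm
    simp only [localBox_smul, Pi.smul_apply, smul_eq_mul, hPL', hP]
    nlinarith [hPNS x y u v]
  · simp [← Finset.mul_sum, hω1]

lemma exists_decomposition_of_mem_localWeights {P : Box n} (hP : IsBox P) (hNS : NonSignalling P)
    {w : LocalStrategy n → ℝ} (hw : w ∈ localWeights P) :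
    ∃ PL PNS : Box n, IsBox PL ∧ IsLocal PL ∧ IsBox PNS ∧ NonSignalling PNS ∧
      ∀ x y u v, P x y u v = (∑ fg, w fg) * PL x y u v + (1 - ∑ fg, w fg) * PNS x y u v := by
  have hp0 : 0 ≤ ∑ fg, w fg := Finset.sum_nonneg fun fg _ => hw.1 fg
  have hp1 := sum_le_one_of_mem_localWeights hP hw
  generalize hp : ∑ fg, w fg = p at hp0 hp1
  rcases hp0.eq_or_lt with rfl | hp0
  · obtain ⟨hB, hL⟩ := isBox_and_isLocal_localBox (w := Pi.single (id, id) 1)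
      (fun fg => by rw [Pi.single_apply]; positivity) (by simp)
    exact ⟨_, P, hB, hL, hP, hNS, fun x y u v => by ring⟩
  obtain ⟨hPL, hPLloc⟩ := isBox_and_isLocal_localBox (w := p⁻¹ • w)
    (fun fg => mul_nonneg (inv_nonneg.2 hp0.le) (hw.1 fg))
    (by simp [← Finset.mul_sum, hp, inv_mul_cancel₀ hp0.ne'])
  have hLeq : ∀ x y u v, p * localBox (p⁻¹ • w) x y u v = localBox w x y u v := by
    intro x y u v
    simp [localBox_smul, ← mul_assoc, mul_inv_cancel₀ hp0.ne']
  rcases hp1.eq_or_lt with rfl | hp1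
  · refine ⟨_, P, hPL, hPLloc, hP, hNS, fun x y u v => ?_⟩
    rw [hLeq, sub_self, zero_mul, add_zero, eq_localBox_of_sum_eq_one hP hw hp]
  · have hslack : ∀ x y u v, 0 ≤ (P - localBox w) x y u v := fun x y u v =>
      sub_nonneg.2 (hw.2 x y u v)
    have hmass : ∀ u v, ∑ x, ∑ y, (P - localBox w) x y u v = 1 - p := fun u v => by
      simp only [Pi.sub_apply, Finset.sum_sub_distrib, hP.2 u v, sum_sum_localBox, hp]
    refine ⟨_, (1 - p)⁻¹ • (P - localBox w), hPL, hPLloc,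
      isBox_inv_smul (sub_pos.2 hp1) hslack hmass,
      (hNS.sub (nonSignalling_localBox w)).smul _, fun x y u v => ?_⟩
    simp only [hLeq, Pi.smul_apply, Pi.sub_apply, smul_eq_mul, ← mul_assoc,
      mul_inv_cancel₀ (sub_pos.2 hp1).ne', one_mul]
    ring

lemma localPart_eq_sSup {P : Box n} (hP : IsBox P) (hNS : NonSignalling P) :
    localPart P = sSup ((fun w => ∑ fg, w fg) '' localWeights P) := by
  unfold localPart
  congr 1
  ext p
  constructor
  · rintro ⟨hp0, hp1, PL, PNS, -, hL, hPNS, -, hdec⟩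
    exact mem_localWeights_of_decomposition hp0 hp1 hL hPNS.1 hdec
  · rintro ⟨w, hw, rfl⟩
    exact ⟨Finset.sum_nonneg fun fg _ => hw.1 fg, sum_le_one_of_mem_localWeights hP hw,
      exists_decomposition_of_mem_localWeights hP hNS hw⟩

lemma zero_mem_localWeights {P : Box n} (hP : IsBox P) : 0 ∈ localWeights P :=
  ⟨fun _ => le_rfl, fun x y u v => by simpa [localBox] using hP.1 x y u v⟩

lemma isCompact_localWeights {P : Box n} (hP : IsBox P) : IsCompact (localWeights P) := by
  have hclosed : IsClosed (localWeights P) := by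
    simp only [localWeights, Set.ofPred_and, Set.ofPred_forall]
    refine (isClosed_iInter fun fg => isClosed_le continuous_const (continuous_apply fg)).inter
      (isClosed_iInter fun x => isClosed_iInter fun y => isClosed_iInter fun u =>
        isClosed_iInter fun v => isClosed_le ?_ continuous_const)
    unfold localBox
    fun_prop
  refine (isCompact_univ_pi fun _ => isCompact_Icc (a := (0 : ℝ)) (b := 1)).of_isClosed_subset
    hclosed fun w hw fg _ => ?_
  exact ⟨hw.1 fg, (Finset.single_le_sum (fun fg' _ => hw.1 fg') (mem_univ fg)).trans
    (sum_le_one_of_mem_localWeights hP hw)⟩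

lemma isGreatest_localPart {P : Box n} (hP : IsBox P) (hNS : NonSignalling P) :
    IsGreatest ((fun w => ∑ fg, w fg) '' localWeights P) (localPart P) := by
  rw [localPart_eq_sSup hP hNS]
  exact ((isCompact_localWeights hP).image (by fun_prop)).isGreatest_sSup
    ((Set.nonempty_of_mem (zero_mem_localWeights hP)).image _)

lemma localPart_nonneg {P : Box n} (hP : IsBox P) (hNS : NonSignalling P) : 0 ≤ localPart P := by
  simpa using (isGreatest_localPart hP hNS).2 ⟨0, zero_mem_localWeights hP, rfl⟩

lemma localPart_le_one {P : Box n} (hP : IsBox P) (hNS : NonSignalling P) : localPart P ≤ 1 := by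
  obtain ⟨w, hw, hval⟩ := (isGreatest_localPart hP hNS).1
  exact hval ▸ sum_le_one_of_mem_localWeights hP hw

lemma mul_localPart_le {P P' : Box n} (hP : IsBox P) (hNS : NonSignalling P) (hP' : IsBox P')
    (hNS' : NonSignalling P') {μ : ℝ} (hμ : 0 ≤ μ) (hle : ∀ x y u v, μ * P x y u v ≤ P' x y u v) :
    μ * localPart P ≤ localPart P' := by
  obtain ⟨w, hw, hval⟩ := (isGreatest_localPart hP hNS).1
  refine (isGreatest_localPart hP' hNS').2 ⟨μ • w, ⟨fun fg => mul_nonneg hμ (hw.1 fg),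
    fun x y u v => ?_⟩, ?_⟩
  · rw [localBox_smul]
    exact (mul_le_mul_of_nonneg_left (hw.2 x y u v) hμ).trans (hle x y u v)
  · simp [← Finset.mul_sum, ← hval]

end LocalPart

section IsotropicBoxes

variable {n : ℕ}

lemma sum_sum_prod_bits (F : Fin n → Bool → Bool → ℝ) :
    ∑ x : Bits n, ∑ y : Bits n, ∏ i, F i (x i) (y i) = ∏ i, ∑ c, ∑ d, F i c d := by
  simp only [← Fintype.prod_sum]
  exact (Fintype.prod_sum fun i c => ∑ d, F i c d).symm

lemma sum_sum_mul_prod_bits (i : Fin n) (g : Bool → Bool → ℝ) (F : Fin n → Bool → Bool → ℝ)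
    (hF : ∀ j ≠ i, ∑ c, ∑ d, F j c d = 1) :
    ∑ x : Bits n, ∑ y : Bits n, g (x i) (y i) * ∏ j, F j (x j) (y j) =
      ∑ c, ∑ d, g c d * F i c d := by
  have hprod : ∀ x y : Bits n, g (x i) (y i) * ∏ j, F j (x j) (y j) =
      ∏ j, (if j = i then g (x j) (y j) else 1) * F j (x j) (y j) := by
    intro x y
    rw [Finset.prod_mul_distrib, Finset.prod_ite_eq' univ i, if_pos (mem_univ i)]
  simp only [hprod]
  rw [sum_sum_prod_bits (fun j c d => (if j = i then g c d else 1) * F j c d),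
    Finset.prod_eq_single i (fun j _ hj => by simp only [if_neg hj, one_mul, hF j hj])
      (fun h => absurd (mem_univ i) h)]
  simp

lemma isoPRB1_nonneg {ε : ℝ} (h0 : 0 ≤ ε) (h1 : ε ≤ 1) (x y u v : Bool) :
    0 ≤ isoPRB1 ε x y u v := by
  unfold isoPRB1; split <;> linarith

lemma sum_isoPRB1_left (ε : ℝ) (y u v : Bool) : ∑ x, isoPRB1 ε x y u v = 1 / 2 := by
  cases u <;> cases v <;> cases y <;> simp [isoPRB1] <;> ring

lemma sum_isoPRB1_right (ε : ℝ) (x u v : Bool) : ∑ y, isoPRB1 ε x y u v = 1 / 2 := by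
  cases u <;> cases v <;> cases x <;> simp [isoPRB1] <;> ring

lemma sum_sum_isoPRB1 (ε : ℝ) (u v : Bool) : ∑ x, ∑ y, isoPRB1 ε x y u v = 1 := by
  simp only [sum_isoPRB1_right]; norm_num

lemma isoPRB_nonneg {ε : ℝ} (h0 : 0 ≤ ε) (h1 : ε ≤ 1) (x y u v : Bits n) :
    0 ≤ isoPRB n ε x y u v :=
  Finset.prod_nonneg fun _ _ => isoPRB1_nonneg h0 h1 _ _ _ _

lemma isBox_isoPRB {ε : ℝ} (h0 : 0 ≤ ε) (h1 : ε ≤ 1) : IsBox (isoPRB n ε) :=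
  ⟨isoPRB_nonneg h0 h1, fun u v =>
    (sum_sum_prod_bits fun i c d => isoPRB1 ε c d (u i) (v i)).trans
      (by simp only [sum_sum_isoPRB1, prod_const_one])⟩

lemma sum_isoPRB_left (ε : ℝ) (y u v : Bits n) : ∑ x, isoPRB n ε x y u v = (1 / 2) ^ n :=
  (Fintype.prod_sum fun i c => isoPRB1 ε c (y i) (u i) (v i)).symm.trans
    (by simp only [sum_isoPRB1_left, prod_const, card_univ, Fintype.card_fin])

lemma sum_isoPRB_right (ε : ℝ) (x u v : Bits n) : ∑ y, isoPRB n ε x y u v = (1 / 2) ^ n :=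
  (Fintype.prod_sum fun i d => isoPRB1 ε (x i) d (u i) (v i)).symm.trans
    (by simp only [sum_isoPRB1_right, prod_const, card_univ, Fintype.card_fin])

lemma nonSignalling_isoPRB (ε : ℝ) : NonSignalling (isoPRB n ε) :=
  ⟨fun _ _ _ _ => by simp only [sum_isoPRB_left], fun _ _ _ _ => by simp only [sum_isoPRB_right]⟩

lemma pow_mul_isoPRB_le {a b μ : ℝ} (hb0 : 0 ≤ b) (hb1 : b ≤ 1) (hμ : 0 ≤ μ)
    (h1 : μ * b ≤ a) (h2 : μ * (1 - b) ≤ 1 - a) (x y u v : Bits n) :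
    μ ^ n * isoPRB n b x y u v ≤ isoPRB n a x y u v := by
  rw [isoPRB, isoPRB, ← Fin.prod_const, ← Finset.prod_mul_distrib]
  refine Finset.prod_le_prod (fun i _ => mul_nonneg hμ (isoPRB1_nonneg hb0 hb1 _ _ _ _))
    fun i _ => ?_
  unfold isoPRB1
  split <;> linarith

lemma pow_mul_localPart_isoPRB_le {a b μ : ℝ} (ha0 : 0 ≤ a) (ha1 : a ≤ 1) (hb0 : 0 ≤ b)
    (hb1 : b ≤ 1) (hμ : 0 ≤ μ) (h1 : μ * b ≤ a) (h2 : μ * (1 - b) ≤ 1 - a) :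
    μ ^ n * localPart (isoPRB n b) ≤ localPart (isoPRB n a) :=
  mul_localPart_le (isBox_isoPRB hb0 hb1) (nonSignalling_isoPRB b) (isBox_isoPRB ha0 ha1)
    (nonSignalling_isoPRB a) (pow_nonneg hμ n) (pow_mul_isoPRB_le hb0 hb1 hμ h1 h2)

lemma localPart_isoPRB_sub_le {a b : ℝ} (ha0 : 0 ≤ a) (ha1 : a ≤ 1) (hb0 : 0 < b) (hb1 : b < 1) :
    localPart (isoPRB n b) - localPart (isoPRB n a) ≤ 1 - min (a / b) ((1 - a) / (1 - b)) ^ n := by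
  set μ := min (a / b) ((1 - a) / (1 - b))
  have hb1' : 0 < 1 - b := sub_pos.2 hb1
  have hμ0 : 0 ≤ μ := le_min (div_nonneg ha0 hb0.le) (div_nonneg (by linarith) hb1'.le)
  have hμ1 : μ ≤ 1 := by
    rcases le_total a b with h | h
    · exact (min_le_left _ _).trans ((div_le_one hb0).2 h)
    · exact (min_le_right _ _).trans ((div_le_one hb1').2 (by linarith))
  have h1 : μ * b ≤ a := by
    calc μ * b ≤ a / b * b := mul_le_mul_of_nonneg_right (min_le_left _ _) hb0.le
      _ = a := div_mul_cancel₀ a hb0.ne'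
  have h2 : μ * (1 - b) ≤ 1 - a := by
    calc μ * (1 - b) ≤ (1 - a) / (1 - b) * (1 - b) :=
          mul_le_mul_of_nonneg_right (min_le_right _ _) hb1'.le
      _ = 1 - a := div_mul_cancel₀ _ hb1'.ne'
  have hratio := pow_mul_localPart_isoPRB_le (n := n) ha0 ha1 hb0.le hb1.le hμ0 h1 h2
  have hle1 := localPart_le_one (isBox_isoPRB hb0.le hb1.le) (nonSignalling_isoPRB (n := n) b)
  have hpow : μ ^ n ≤ 1 := pow_le_one₀ hμ0 hμ1
  nlinarith

end IsotropicBoxes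

section CHSH

variable {n : ℕ}

def chshSign (c d a b : Bool) : ℝ := if xor c d = (a && b) then 1 else -1

def chsh (i : Fin n) (P : Box n) : ℝ :=
  ∑ a, ∑ b, ∑ x, ∑ y, chshSign (x i) (y i) a b *
    P x y (Function.update (fun _ => false) i a) (Function.update (fun _ => false) i b)

lemma chsh_add (i : Fin n) (P Q : Box n) : chsh i (P + Q) = chsh i P + chsh i Q := by
  simp only [chsh, Pi.add_apply, mul_add, Finset.sum_add_distrib]

lemma chsh_le_of_nonneg (i : Fin n) {Q : Box n} {m : ℝ} (hQ : ∀ x y u v, 0 ≤ Q x y u v)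
    (hm : ∀ u v, ∑ x, ∑ y, Q x y u v = m) : chsh i Q ≤ 4 * m := by
  calc chsh i Q ≤ ∑ a : Bool, ∑ b : Bool, ∑ x, ∑ y,
        Q x y (Function.update (fun _ => false) i a) (Function.update (fun _ => false) i b) := by
        refine Finset.sum_le_sum fun a _ => Finset.sum_le_sum fun b _ =>
          Finset.sum_le_sum fun x _ => Finset.sum_le_sum fun y _ => ?_
        unfold chshSign
        split <;> linarith [hQ x y (Function.update (fun _ => false) i a)
          (Function.update (fun _ => false) i b)]
    _ = 4 * m := by
        simp only [hm, Finset.sum_const, card_univ, Fintype.card_bool, nsmul_eq_mul]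
        ring

lemma sum_chshSign_le (A B : Bool → Bool) : ∑ a, ∑ b, chshSign (A a) (B b) a b ≤ 2 := by
  simp only [Fintype.sum_bool, chshSign]
  cases A true <;> cases A false <;> cases B true <;> cases B false <;> norm_num

lemma chsh_detBox_le (i : Fin n) (f g : Bits n → Bits n) : chsh i (detBox f g) ≤ 2 := by
  have hdet : chsh i (detBox f g) = ∑ a, ∑ b,
      chshSign (f (Function.update (fun _ => false) i a) i)
        (g (Function.update (fun _ => false) i b) i) a b := by
    simp [chsh, detBox, ite_and]
  exact hdet ▸ sum_chshSign_le _ _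

lemma chsh_localBox (i : Fin n) (w : LocalStrategy n → ℝ) :
    chsh i (localBox w) = ∑ fg, w fg * chsh i (detBox fg.1 fg.2) := by
  simp only [chsh, localBox, Finset.mul_sum]
  simp_rw [Finset.sum_comm (s := (univ : Finset (Bits n))) (t := (univ : Finset (LocalStrategy n))),
    Finset.sum_comm (s := (univ : Finset Bool)) (t := (univ : Finset (LocalStrategy n)))]
  simp only [mul_left_comm]

lemma chsh_isoPRB (i : Fin n) (ε : ℝ) : chsh i (isoPRB n ε) = 4 * (1 - 2 * ε) := by
  have hab : ∀ a b, ∑ x : Bits n, ∑ y : Bits n, chshSign (x i) (y i) a b *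
      isoPRB n ε x y (Function.update (fun _ => false) i a)
        (Function.update (fun _ => false) i b) = 1 - 2 * ε := by
    intro a b
    simp only [isoPRB]
    rw [sum_sum_mul_prod_bits i (fun c d => chshSign c d a b) _
      fun j _ => sum_sum_isoPRB1 ε _ _]
    cases a <;> cases b <;> simp [chshSign, isoPRB1] <;> ring
  simp only [chsh, hab, Finset.sum_const, card_univ, Fintype.card_bool, nsmul_eq_mul]
  ring

lemma localPart_isoPRB_le (i : Fin n) {ε : ℝ} (h0 : 0 ≤ ε) (h1 : ε ≤ 1) :
    localPart (isoPRB n ε) ≤ 4 * ε := by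
  obtain ⟨w, hw, hval⟩ := (isGreatest_localPart (isBox_isoPRB h0 h1) (nonSignalling_isoPRB ε)).1
  have hsplit := chsh_add i (localBox w) (isoPRB n ε - localBox w)
  rw [add_sub_cancel, chsh_isoPRB] at hsplit
  have hlocal : chsh i (localBox w) ≤ 2 * ∑ fg, w fg := by
    rw [chsh_localBox, Finset.mul_sum]
    exact Finset.sum_le_sum fun fg _ => by
      nlinarith [chsh_detBox_le i fg.1 fg.2, hw.1 fg]
  have hslack : chsh i (isoPRB n ε - localBox w) ≤ 4 * (1 - ∑ fg, w fg) :=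
    chsh_le_of_nonneg i (fun x y u v => sub_nonneg.2 (hw.2 x y u v)) fun u v => by
      simp only [Pi.sub_apply, Finset.sum_sub_distrib, (isBox_isoPRB h0 h1).2 u v,
        sum_sum_localBox]
  simp only at hval
  linarith

end CHSH

section Continuity

open Filter Topology

variable {n : ℕ}

lemma continuousAt_localPart_isoPRB {ε₀ : ℝ} (h0 : 0 < ε₀) (h1 : ε₀ < 1) :
    ContinuousAt (fun ε => localPart (isoPRB n ε)) ε₀ := by
  have hε₀ : ε₀ ≠ 0 := h0.ne'
  have hε₀' : 1 - ε₀ ≠ 0 := (sub_pos.2 h1).ne'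
  have hlow : Tendsto (fun ε => localPart (isoPRB n ε₀) -
      (1 - min (ε / ε₀) ((1 - ε) / (1 - ε₀)) ^ n)) (𝓝 ε₀) (𝓝 (localPart (isoPRB n ε₀))) := by
    have : ContinuousAt (fun ε => localPart (isoPRB n ε₀) -
        (1 - min (ε / ε₀) ((1 - ε) / (1 - ε₀)) ^ n)) ε₀ := by
      fun_prop (disch := assumption)
    simpa [div_self hε₀, div_self hε₀'] using this.tendsto
  have hup : Tendsto (fun ε => localPart (isoPRB n ε₀) +
      (1 - min (ε₀ / ε) ((1 - ε₀) / (1 - ε)) ^ n)) (𝓝 ε₀) (𝓝 (localPart (isoPRB n ε₀))) := by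
    have : ContinuousAt (fun ε => localPart (isoPRB n ε₀) +
        (1 - min (ε₀ / ε) ((1 - ε₀) / (1 - ε)) ^ n)) ε₀ := by
      fun_prop (disch := assumption)
    simpa [div_self hε₀, div_self hε₀'] using this.tendsto
  have hnear : ∀ᶠ ε in 𝓝 ε₀, ε ∈ Set.Ioo 0 1 := Ioo_mem_nhds h0 h1
  refine tendsto_of_tendsto_of_tendsto_of_le_of_le' hlow hup ?_ ?_
  · filter_upwards [hnear] with ε hε
    linarith [localPart_isoPRB_sub_le (n := n) hε.1.le hε.2.le h0 h1]
  · filter_upwards [hnear] with ε hε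
    linarith [localPart_isoPRB_sub_le (n := n) h0.le h1.le hε.1 hε.2]

lemma continuousWithinAt_localPart_isoPRB_zero (i : Fin n) :
    ContinuousWithinAt (fun ε => localPart (isoPRB n ε)) (Set.Icc 0 1) 0 := by
  have hzero : localPart (isoPRB n 0) = 0 :=
    le_antisymm (by simpa using localPart_isoPRB_le i le_rfl zero_le_one)
      (localPart_nonneg (isBox_isoPRB le_rfl zero_le_one) (nonSignalling_isoPRB 0))
  have hlin : Tendsto (fun ε : ℝ => 4 * ε) (𝓝[Set.Icc 0 1] 0) (𝓝 0) := by
    simpa using ((continuous_const_mul (4 : ℝ)).tendsto 0).mono_left nhdsWithin_le_nhds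
  rw [ContinuousWithinAt, hzero]
  refine tendsto_of_tendsto_of_tendsto_of_le_of_le' tendsto_const_nhds hlin ?_ ?_
  · filter_upwards [self_mem_nhdsWithin] with ε hε
    exact localPart_nonneg (isBox_isoPRB hε.1 hε.2) (nonSignalling_isoPRB ε)
  · filter_upwards [self_mem_nhdsWithin] with ε hε
    exact localPart_isoPRB_le i hε.1 hε.2

lemma continuousOn_localPart_isoPRB (hn : 0 < n) :
    ContinuousOn (fun ε => localPart (isoPRB n ε)) (Set.Ico 0 1) := by
  intro ε hε
  rcases hε.1.eq_or_lt with rfl | h0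
  · exact (continuousWithinAt_localPart_isoPRB_zero ⟨0, hn⟩).mono Set.Ico_subset_Icc_self
  · exact (continuousAt_localPart_isoPRB h0 hε.2).continuousWithinAt

end Continuity

section LocalPartLinearProgram

variable {n : ℕ}

abbrev BoxIndex (n : ℕ) := Bits n × Bits n × Bits n × Bits n

/-- The constraints `-w fg ≤ 0` and `localBox w x y u v ≤ P x y u v` cutting out `localWeights P`;
only their right-hand sides `localBound P` depend on `P`. -/
def localConstraint (n : ℕ) :
    LocalStrategy n ⊕ BoxIndex n → (LocalStrategy n → ℝ) →ₗ[ℝ] ℝ :=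
  Sum.elim (fun fg => -LinearMap.proj fg)
    fun k => ∑ fg, detBox fg.1 fg.2 k.1 k.2.1 k.2.2.1 k.2.2.2 • LinearMap.proj fg

def localBound (P : Box n) : LocalStrategy n ⊕ BoxIndex n → ℝ :=
  Sum.elim 0 fun k => P k.1 k.2.1 k.2.2.1 k.2.2.2

lemma polyhedron_localConstraint (P : Box n) :
    polyhedron (localConstraint n) (localBound P) = localWeights P := by
  ext w
  simp [polyhedron, localWeights, localConstraint, localBound, localBox, Sum.forall, Prod.forall,
    mul_comm]

theorem exists_localPart_eq_linear (n : ℕ) :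
    ∃ φ : Finset (LocalStrategy n ⊕ BoxIndex n) → (LocalStrategy n ⊕ BoxIndex n → ℝ) →ₗ[ℝ] ℝ,
      ∀ P : Box n, IsBox P → NonSignalling P → ∃ S, localPart P = φ S (localBound P) := by
  obtain ⟨φ, hφ⟩ := exists_isGreatest_image_polyhedron (localConstraint n)
    (∑ fg, ContinuousLinearMap.proj fg)
  refine ⟨φ, fun P hP hNS => ?_⟩
  have hF := polyhedron_localConstraint P
  obtain ⟨S, hS⟩ := hφ (localBound P) (hF ▸ ⟨0, zero_mem_localWeights hP⟩)
    (hF ▸ isCompact_localWeights hP)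
  have hobj : ⇑(∑ fg, ContinuousLinearMap.proj fg : (LocalStrategy n → ℝ) →L[ℝ] ℝ) =
      fun w => ∑ fg, w fg := by
    ext w
    simp
  rw [hF, hobj] at hS
  exact ⟨S, (isGreatest_localPart hP hNS).unique hS⟩

end LocalPartLinearProgram

section Polynomials

open Polynomial

variable {n : ℕ}

noncomputable def isoPRB1Poly (x y u v : Bool) : ℝ[X] :=
  if xor x y = (u && v) then C (1 / 2) * (1 - X) else C (1 / 2) * X

lemma eval_isoPRB1Poly (ε : ℝ) (x y u v : Bool) :
    (isoPRB1Poly x y u v).eval ε = isoPRB1 ε x y u v := by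
  unfold isoPRB1Poly isoPRB1
  split <;> simp <;> ring

lemma natDegree_isoPRB1Poly_le (x y u v : Bool) : (isoPRB1Poly x y u v).natDegree ≤ 1 := by
  unfold isoPRB1Poly
  split <;> compute_degree!

noncomputable def isoPRBPoly (x y u v : Bits n) : ℝ[X] :=
  ∏ i, isoPRB1Poly (x i) (y i) (u i) (v i)

lemma eval_isoPRBPoly (ε : ℝ) (x y u v : Bits n) :
    (isoPRBPoly x y u v).eval ε = isoPRB n ε x y u v := by
  simp [isoPRBPoly, isoPRB, eval_prod, eval_isoPRB1Poly]

lemma natDegree_isoPRBPoly_le (x y u v : Bits n) : (isoPRBPoly x y u v).natDegree ≤ n :=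
  (natDegree_prod_le _ _).trans <|
    (Finset.sum_le_sum fun i _ => natDegree_isoPRB1Poly_le _ _ _ _).trans (by simp)

lemma LinearMap.exists_polynomial_eval_eq {σ : Type*} [Fintype σ] (φ : (σ → ℝ) →ₗ[ℝ] ℝ)
    {p : σ → ℝ[X]} {d : ℕ} (hp : ∀ s, (p s).natDegree ≤ d) :
    ∃ q : ℝ[X], q.natDegree ≤ d ∧ ∀ t, φ (fun s => (p s).eval t) = q.eval t := by
  classical
  refine ⟨∑ s, C (φ fun j => if s = j then 1 else 0) * p s,
    natDegree_sum_le_of_forall_le _ _ fun s _ => (natDegree_C_mul_le _ _).trans (hp s),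
    fun t => ?_⟩
  rw [LinearMap.pi_apply_eq_sum_univ, eval_finsetSum]
  simp [mul_comm]

theorem exists_polynomials_localPart_isoPRB (n : ℕ) :
    ∃ q : Finset (LocalStrategy n ⊕ BoxIndex n) → ℝ[X], (∀ S, (q S).natDegree ≤ n) ∧
      ∀ ε ∈ Set.Icc (0 : ℝ) 1, ∃ S, localPart (isoPRB n ε) = (q S).eval ε := by
  obtain ⟨φ, hφ⟩ := exists_localPart_eq_linear n
  set p : LocalStrategy n ⊕ BoxIndex n → ℝ[X] :=
    Sum.elim 0 fun k => isoPRBPoly k.1 k.2.1 k.2.2.1 k.2.2.2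
  have hp : ∀ s, (p s).natDegree ≤ n := by
    rintro (fg | k)
    · simp [p]
    · exact natDegree_isoPRBPoly_le _ _ _ _
  choose q hqdeg hq using fun S => (φ S).exists_polynomial_eval_eq hp
  refine ⟨q, hqdeg, fun ε hε => ?_⟩
  obtain ⟨S, hS⟩ := hφ _ (isBox_isoPRB hε.1 hε.2) (nonSignalling_isoPRB ε)
  refine ⟨S, hS.trans (Eq.trans ?_ (hq S ε))⟩
  congr 1
  funext s
  rcases s with fg | k
  · simp [localBound, p]
  · simp [localBound, p, eval_isoPRBPoly]

end Polynomials

/-- the local part of n isotropic ε-PRBs, as a function of ε on `[0,1/4]`,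
is continuous and piecewise polynomial of degree at most n on a finite partition of the
domain into intervals. -/
theorem stmt12 (n : ℕ) (hn : 1 ≤ n) :
    ContinuousOn (fun ε : ℝ => localPart (isoPRB n ε)) (Set.Icc 0 (1 / 4)) ∧
    ∃ (m : ℕ) (I : Fin m → Set ℝ) (q : Fin m → Polynomial ℝ),
      (∀ i, (I i).OrdConnected) ∧
      (∀ i j, i ≠ j → Disjoint (I i) (I j)) ∧
      (⋃ i, I i) = Set.Icc (0 : ℝ) (1 / 4) ∧
      (∀ i, (q i).natDegree ≤ n) ∧
      (∀ i, ∀ ε ∈ I i, localPart (isoPRB n ε) = (q i).eval ε) := by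
  have hcont : ContinuousOn (fun ε : ℝ => localPart (isoPRB n ε)) (Set.Icc 0 (1 / 4)) :=
    (continuousOn_localPart_isoPRB hn).mono (Set.Icc_subset_Ico_right (by norm_num))
  obtain ⟨q, hq, hsel⟩ := exists_polynomials_localPart_isoPRB n
  exact ⟨hcont, isPiecewisePolynomialOn_Icc (by norm_num) hcont q hq fun ε hε =>
    hsel ε ⟨hε.1, hε.2.trans (by norm_num)⟩⟩
end

section
/- Let n ≥ 1 and δ ∈ (0,1/3), and let P_b^{n,δ} be the product of n maximally biased δ-PRBs. For all functions f, g : {0,1}ⁿ → {0,1}ⁿ, at least one of the following holds: (i) there exist u, v ∈ {0,1}ⁿ such that P_b^{n,δ}(f(u),g(v)|u,v) = 0 (i.e., the corresponding local deterministic strategy has weight zero), or (ii) there exist u, v ∈ {0,1}ⁿ such that f(u)_i ⊕ g(v)_i ≠ u_i·v_i for every i ∈ {1,…,n} (i.e., the strategy loses all n rounds of the CHSH game on some input pair). -/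
open Finset

/-- for n maximally biased δ-PRBs, every local deterministic strategy
either has weight zero or loses all n CHSH rounds on some input pair. -/
theorem stmt16 (n : ℕ) (hn : 1 ≤ n) (δ : ℝ) (hδ0 : 0 < δ) (hδ : δ < 1 / 3)
    (f g : Bits n → Bits n) :
    (∃ u v : Bits n, biasedPRB n δ (f u) (g v) u v = 0) ∨
    (∃ u v : Bits n, ∀ i : Fin n, xor (f u i) (g v i) ≠ (u i && v i)) := by

  by_cases hz : ∃ u v : Bits n, biasedPRB n δ (f u) (g v) u v = 0
  · exact Or.inl hz
  · right
    push_neg at hz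
    classical
    -- every single-round factor is nonzero
    have Hfac : ∀ u v : Bits n, ∀ i : Fin n,
        biasedPRB1 δ (f u i) (g v i) (u i) (v i) ≠ 0 := by
      intro u v i
      have h := hz u v
      rw [biasedPRB] at h
      exact Finset.prod_ne_zero_iff.mp h i (Finset.mem_univ i)
    -- on (true,true) inputs, outputs differ
    have hTT : ∀ u v : Bits n, ∀ i : Fin n, u i = true → v i = true →
        f u i = !(g v i) := by
      intro u v i hu hv
      have h := Hfac u v i
      rw [hu, hv] at h
      cases hx : f u i <;> cases hy : g v i <;> rw [hx, hy] at h <;>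
        simp_all [biasedPRB1]
    have hTF : ∀ u v : Bits n, ∀ i : Fin n, (u i && v i) = false →
        f u i = true → g v i = true := by
      intro u v i huv hf
      have h := Hfac u v i
      rw [hf] at h
      cases hy : g v i
      · exfalso; rw [hy] at h; simp [biasedPRB1, huv] at h
      · rfl
    set ones : Bits n := fun _ => true with hones
    set a : Bits n := f ones with hadef
    have S1 : ∀ v : Bits n, ∀ i : Fin n, v i = true → g v i = !(a i) := by
      intro v i hv
      have := hTT ones v i rfl hv
      rw [← hadef] at this
      rw [this, Bool.not_not]
    have S2 : ∀ u : Bits n, ∀ i : Fin n, u i = true → f u i = a i := by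
      intro u i hu
      have h1 := hTT u ones i hu rfl
      have h2 := hTT ones ones i rfl rfl
      rw [← hadef] at h2
      rw [h1, ← h2]
    set uu : Bits n := fun i => if a i = false ∧ ∃ w, f w i = true then true else false with huu
    set vv : Bits n := fun i => if a i = false ∧ ¬ ∃ w, f w i = true then true else false with hvv
    refine ⟨uu, vv, ?_⟩
    intro i
    by_cases ha : a i = false
    · by_cases hex : ∃ w, f w i = true
      · -- case 2
        have hui : uu i = true := by simp [huu, ha, hex]
        have hvi : vv i = false := by simp [hvv, hex]
        have hfu : f uu i = false := by rw [S2 uu i hui, ha]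
        obtain ⟨w, hw⟩ := hex
        have hwi : w i = false := by
          cases hwi : w i
          · rfl
          · exfalso; have := S2 w i hwi; rw [hw, ha] at this; exact Bool.true_eq_false.mp this
        have hgv : g vv i = true := hTF w vv i (by rw [hwi]; rfl) hw
        rw [hfu, hgv, hui, hvi]; simp
      · -- case 3
        have hui : uu i = false := by
          show (if _ then _ else _) = false
          rw [if_neg (fun h => hex h.2)]
        have hvi : vv i = true := by
          show (if _ then _ else _) = true
          rw [if_pos ⟨ha, hex⟩]
        have hfu : f uu i = false := by
          cases hfu : f uu i
          · rfl
          · exact absurd ⟨uu, hfu⟩ hex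
        have hgv : g vv i = true := by rw [S1 vv i hvi, ha]; rfl
        rw [hfu, hgv, hui, hvi]; simp
    · -- case 1 : a i = true
      have ha' : a i = true := by revert ha; cases a i <;> simp
      have hui : uu i = false := by simp [huu, ha']
      have hvi : vv i = false := by simp [hvv, ha']
      have hfu : f uu i = false := by
        cases hfu : f uu i
        · rfl
        · exfalso
          have := hTF uu ones i (by rw [hui]; rfl) hfu
          have h2 := S1 ones i rfl
          rw [ha'] at h2
          simp [this] at h2
      have hgv : g vv i = true := hTF ones vv i (by rw [hvi]; simp) (by rw [S2 ones i rfl]; exact ha')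
      rw [hfu, hgv, hui, hvi]; simp
end

section
/- For every n ≥ 1 and every δ ∈ [0,1/3], the local part of the system P_b^{n,δ} of n maximally biased δ-PRBs equals (3δ)ⁿ. -/
open Finset

/-!
For the lower bound, one δ-PRB is `3δ` times the uniform mixture of the deterministic
strategies `(u, ¬v)`, `(0, v)`, `(¬u, 1)` plus `1 - 3δ` times a non-negative box. Hence `n`
copies dominate `(3δ)ⁿ` times the product of these local boxes, and the remainder, renormalised,
is non-signalling because both the PRB system and the local box are.

For the upper bound, consider the Bell functional `I(Q) = ∑ Q(0…0, 1…1 | u, v)` over the inputs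
with `u ∧ v = 0` coordinatewise. It is nonnegative on boxes and takes the value `(3δ)ⁿ` on the
PRB system. Every deterministic strategy `(f, g)` that is admissible in a local part of the
system (i.e. whose outputs lie in its support) must answer `f u i ≠ g v i` when `u i = v i = 1`
and `f u i ≤ g v i` otherwise; such a strategy outputs `0…0` and `1…1` on some disjoint pair
`(u, v)`, so `I ≥ 1` on it. Hence a local part of weight `p` forces `p ≤ I(P) = (3δ)ⁿ`.
-/

variable {n : ℕ}

def HasLocalPart (P : Box n) (p : ℝ) : Prop :=
  0 ≤ p ∧ p ≤ 1 ∧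
    ∃ PL PNS : Box n, IsBox PL ∧ IsLocal PL ∧ IsBox PNS ∧ NonSignalling PNS ∧
      ∀ x y u v, P x y u v = p * PL x y u v + (1 - p) * PNS x y u v

theorem localPart_eq_of_isGreatest {P : Box n} {c : ℝ}
    (h : IsGreatest {p | HasLocalPart P p} c) : localPart P = c :=
  h.csSup_eq

theorem sum_detBox_left (f g : Bits n → Bits n) (y u v : Bits n) :
    ∑ x, detBox f g x y u v = if y = g v then 1 else 0 := by
  simp [detBox, ite_and, sum_ite_eq']

theorem sum_detBox_right (f g : Bits n → Bits n) (x u v : Bits n) :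
    ∑ y, detBox f g x y u v = if x = f u then 1 else 0 := by
  simp [detBox, ite_and, sum_ite_eq']

theorem detBox_nonneg (f g : Bits n → Bits n) (x y u v : Bits n) : 0 ≤ detBox f g x y u v := by
  unfold detBox; split <;> norm_num

theorem IsLocal.isBox {L : Box n} (hL : IsLocal L) : IsBox L := by
  obtain ⟨w, hw0, hw1, hL⟩ := hL
  refine ⟨fun x y u v => ?_, fun u v => ?_⟩
  · rw [hL]
    exact sum_nonneg fun fg _ => mul_nonneg (hw0 fg) (detBox_nonneg ..)
  · simp only [hL]
    rw [sum_congr rfl fun x _ => sum_comm, sum_comm]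
    simp [← mul_sum, sum_detBox_right, hw1]

theorem IsLocal.nonSignalling {L : Box n} (hL : IsLocal L) : NonSignalling L := by
  obtain ⟨w, -, -, hL⟩ := hL
  constructor
  · intro y v u u'
    simp only [hL]
    rw [sum_comm, sum_comm (γ := Bits n)]
    simp only [← mul_sum, sum_detBox_left]
  · intro x u v v'
    simp only [hL]
    rw [sum_comm, sum_comm (γ := Bits n)]
    simp only [← mul_sum, sum_detBox_right]

theorem eq_of_le_of_isBox {P Q : Box n} (hP : IsBox P) (hQ : IsBox Q)
    (hle : ∀ x y u v, P x y u v ≤ Q x y u v) : P = Q := by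
  funext x y u v
  have hrow : ∀ x, ∑ y, P x y u v = ∑ y, Q x y u v := fun x => by
    refine (sum_eq_sum_iff_of_le fun x _ => sum_le_sum fun y _ => hle x y u v).1
      ?_ x (mem_univ x)
    rw [hP.2, hQ.2]
  exact (sum_eq_sum_iff_of_le fun y _ => hle x y u v).1 (hrow x) y (mem_univ y)

theorem hasLocalPart_of_smul_le {P L : Box n} {c : ℝ} (hP : IsBox P) (hPns : NonSignalling P)
    (hL : IsLocal L) (hc0 : 0 ≤ c) (hc1 : c ≤ 1) (hle : ∀ x y u v, c * L x y u v ≤ P x y u v) :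
    HasLocalPart P c := by
  refine ⟨hc0, hc1, L, ?_⟩
  rcases hc1.lt_or_eq with hc1 | rfl
  · have hc : (0 : ℝ) < 1 - c := sub_pos.2 hc1
    have hLns := hL.nonSignalling
    refine ⟨fun x y u v => (P x y u v - c * L x y u v) / (1 - c), hL.isBox, hL, ⟨?_, ?_⟩, ⟨?_, ?_⟩,
      fun x y u v => ?_⟩
    · exact fun x y u v => div_nonneg (sub_nonneg.2 (hle x y u v)) hc.le
    · intro u v
      simp only [← sum_div, sum_sub_distrib, ← mul_sum, hP.2, hL.isBox.2, mul_one]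
      exact div_self hc.ne'
    · intro y v u u'
      simp only [← sum_div, sum_sub_distrib, ← mul_sum, hPns.1 y v u u',
        hLns.1 y v u u']
    · intro x u v v'
      simp only [← sum_div, sum_sub_distrib, ← mul_sum, hPns.2 x u v v',
        hLns.2 x u v v']
    · field_simp
      ring
  · have hPL : P = L := (eq_of_le_of_isBox hL.isBox hP (by simpa using hle)).symm
    exact ⟨P, hL.isBox, hL, hP, hPns, fun x y u v => by simp [hPL]⟩

def bellValue (a Q : Box n) : ℝ := ∑ u, ∑ v, ∑ x, ∑ y, a x y u v * Q x y u v

theorem bellValue_nonneg {a Q : Box n} (ha : ∀ x y u v, 0 ≤ a x y u v)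
    (hQ : ∀ x y u v, 0 ≤ Q x y u v) : 0 ≤ bellValue a Q :=
  sum_nonneg fun u _ => sum_nonneg fun v _ => sum_nonneg fun x _ =>
    sum_nonneg fun y _ => mul_nonneg (ha x y u v) (hQ x y u v)

theorem bellValue_add (a A B : Box n) (p q : ℝ) :
    bellValue a (fun x y u v => p * A x y u v + q * B x y u v) =
      p * bellValue a A + q * bellValue a B := by
  simp only [bellValue, mul_add, sum_add_distrib, mul_sum, mul_left_comm p,
    mul_left_comm q]

theorem bellValue_sum {ι : Type*} [Fintype ι] (a : Box n) (c : ι → ℝ) (Q : ι → Box n) :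
    bellValue a (fun x y u v => ∑ j, c j * Q j x y u v) = ∑ j, c j * bellValue a (Q j) := by
  simp only [bellValue, mul_sum, mul_left_comm (c _)]
  symm
  rw [sum_comm]; refine sum_congr rfl fun u _ => ?_
  rw [sum_comm]; refine sum_congr rfl fun v _ => ?_
  rw [sum_comm]; refine sum_congr rfl fun x _ => ?_
  exact sum_comm

theorem bellValue_detBox (a : Box n) (f g : Bits n → Bits n) :
    bellValue a (detBox f g) = ∑ u, ∑ v, a (f u) (g v) u v := by
  simp [bellValue, detBox, ite_and, sum_ite_eq']

theorem le_bellValue_of_hasLocalPart {P a : Box n} {p : ℝ} (ha : ∀ x y u v, 0 ≤ a x y u v)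
    (hdet : ∀ f g : Bits n → Bits n, (∀ u v, P (f u) (g v) u v ≠ 0) →
      1 ≤ ∑ u, ∑ v, a (f u) (g v) u v)
    (hp : HasLocalPart P p) : p ≤ bellValue a P := by
  obtain ⟨hp0, hp1, PL, PNS, -, ⟨w, hw0, hw1, hPL⟩, ⟨hPNS0, -⟩, -, hP⟩ := hp
  have hPL' : PL = fun x y u v => ∑ fg, w fg * detBox fg.1 fg.2 x y u v := by
    funext x y u v; exact hPL x y u v
  have hsupp (fg : (Bits n → Bits n) × (Bits n → Bits n)) (u v : Bits n) :
      p * w fg ≤ P (fg.1 u) (fg.2 v) u v := by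
    have hw : w fg ≤ PL (fg.1 u) (fg.2 v) u v := by
      rw [hPL]
      calc w fg = w fg * detBox fg.1 fg.2 (fg.1 u) (fg.2 v) u v := by simp [detBox]
        _ ≤ _ := single_le_sum (f := fun fg' => w fg' * detBox fg'.1 fg'.2 _ _ u v)
          (fun fg' _ => mul_nonneg (hw0 fg') (detBox_nonneg ..)) (mem_univ fg)
    rw [hP]
    nlinarith [mul_le_mul_of_nonneg_left hw hp0, hPNS0 (fg.1 u) (fg.2 v) u v]
  have hweight (fg : (Bits n → Bits n) × (Bits n → Bits n)) :
      p * w fg ≤ p * w fg * bellValue a (detBox fg.1 fg.2) := by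
    rcases (mul_nonneg hp0 (hw0 fg)).eq_or_lt with h | h
    · simp [← h]
    · rw [bellValue_detBox]
      exact le_mul_of_one_le_right h.le
        (hdet _ _ fun u v => (h.trans_le (hsupp fg u v)).ne')
  calc p = ∑ fg, p * w fg := by rw [← mul_sum, hw1, mul_one]
    _ ≤ ∑ fg, p * w fg * bellValue a (detBox fg.1 fg.2) := sum_le_sum fun fg _ => hweight fg
    _ = p * bellValue a PL := by rw [hPL', bellValue_sum, mul_sum]; simp only [mul_assoc]
    _ ≤ p * bellValue a PL + (1 - p) * bellValue a PNS :=
      le_add_of_nonneg_right (mul_nonneg (sub_nonneg.2 hp1) (bellValue_nonneg ha hPNS0))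
    _ = bellValue a P := by rw [← bellValue_add]; congr; funext x y u v; exact (hP x y u v).symm

section Product

noncomputable def prodBox (n : ℕ) (F : Bool → Bool → Bool → Bool → ℝ) : Box n :=
  fun x y u v => ∏ i, F (x i) (y i) (u i) (v i)

variable {F : Bool → Bool → Bool → Bool → ℝ}

theorem isBox_prodBox (h0 : ∀ x y u v, 0 ≤ F x y u v) (h1 : ∀ u v, ∑ x, ∑ y, F x y u v = 1) :
    IsBox (prodBox n F) := by
  refine ⟨fun x y u v => prod_nonneg fun i _ => h0 _ _ _ _, fun u v => ?_⟩
  calc ∑ x, ∑ y, prodBox n F x y u v = ∏ i, ∑ a, ∑ b, F a b (u i) (v i) := by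
        simp only [prodBox, Fintype.prod_sum]
    _ = 1 := prod_eq_one fun i _ => h1 _ _

theorem nonSignalling_prodBox (hB : ∀ y v u u', ∑ x, F x y u v = ∑ x, F x y u' v)
    (hA : ∀ x u v v', ∑ y, F x y u v = ∑ y, F x y u v') : NonSignalling (prodBox n F) := by
  have hx (y u v : Bits n) : ∑ x, prodBox n F x y u v = ∏ i, ∑ a, F a (y i) (u i) (v i) := by
    simp only [prodBox, Fintype.prod_sum]
  have hy (x u v : Bits n) : ∑ y, prodBox n F x y u v = ∏ i, ∑ b, F (x i) b (u i) (v i) := by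
    simp only [prodBox, Fintype.prod_sum]
  exact ⟨fun y v u u' => by rw [hx, hx]; exact prod_congr rfl fun i _ => hB _ _ _ _,
    fun x u v v' => by rw [hy, hy]; exact prod_congr rfl fun i _ => hA _ _ _ _⟩

theorem detBox_pi {κ : Type*} (f g : κ → Bool → Bool) (σ : Fin n → κ) (x y u v : Bits n) :
    detBox (fun u i => f (σ i) (u i)) (fun v i => g (σ i) (v i)) x y u v =
      ∏ i, if x i = f (σ i) (u i) ∧ y i = g (σ i) (v i) then 1 else 0 := by
  simp only [detBox, prod_boole, funext_iff, mem_univ, true_implies, forall_and]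

theorem isLocal_prodBox {κ : Type*} [Fintype κ] (w : κ → ℝ) (hw0 : ∀ k, 0 ≤ w k)
    (hw1 : ∑ k, w k = 1) (f g : κ → Bool → Bool) :
    IsLocal (prodBox n fun x y u v => ∑ k, w k * if x = f k u ∧ y = g k v then 1 else 0) := by
  classical
  let strat (σ : Fin n → κ) : (Bits n → Bits n) × (Bits n → Bits n) :=
    (fun u i => f (σ i) (u i), fun v i => g (σ i) (v i))
  refine ⟨fun fg => ∑ σ, if fg = strat σ then ∏ i, w (σ i) else 0,
    fun fg => sum_nonneg fun σ _ => ?_, ?_, fun x y u v => ?_⟩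
  · split
    · exact prod_nonneg fun i _ => hw0 _
    · exact le_rfl
  · rw [sum_comm]
    simp only [sum_ite_eq', mem_univ, if_true]
    rw [← Fintype.prod_sum (fun _ k => w k), hw1, prod_const_one]
  · simp only [sum_mul, ite_mul, zero_mul]
    rw [sum_comm]
    simp only [sum_ite_eq', mem_univ, if_true, strat, detBox_pi,
      ← prod_mul_distrib, prodBox, Fintype.prod_sum]

theorem bellValue_prodBox (A F : Bool → Bool → Bool → Bool → ℝ) :
    bellValue (prodBox n A) (prodBox n F) = (∑ u, ∑ v, ∑ x, ∑ y, A x y u v * F x y u v) ^ n := by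
  rw [← Fin.prod_const]
  simp only [Fintype.prod_sum, bellValue, prodBox, ← prod_mul_distrib]

end Product

theorem exists_bell_witness (f g : Bits n → Bits n)
    (hne : ∀ u v i, u i = true → v i = true → f u i ≠ g v i)
    (hle : ∀ u v i, (u i && v i) = false → f u i = true → g v i = true) :
    ∃ u v : Bits n, ∀ i, (u i && v i) = false ∧ f u i = false ∧ g v i = true := by
  classical
  set a := f fun _ => true
  have hf (u : Bits n) (i : Fin n) (hu : u i = true) : f u i = a i :=
    (Bool.eq_not_iff.2 (hne u _ i hu rfl)).trans
      (Bool.eq_not_iff.2 (hne _ (fun _ => true) i rfl rfl)).symm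
  have hg (v : Bits n) (i : Fin n) (hv : v i = true) : g v i = !a i :=
    Bool.eq_not_iff.2 (hne _ v i rfl hv).symm
  -- `u` switches on the coordinates where Bob always answers 1; `v` the others where `a i = 0`.
  let T (i : Fin n) : Prop := ∀ w, g w i = true
  refine ⟨fun i => decide (T i), fun i => !a i && !decide (T i), fun i => ⟨?_, ?_, ?_⟩⟩
  · by_cases hT : T i <;> simp [hT]
  · by_cases hT : T i
    · rw [hf _ i (by simpa using hT)]
      simpa [hT (fun _ => true)] using (hg (fun _ => true) i rfl).symm
    · obtain ⟨w, hw⟩ := not_forall.1 hT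
      by_contra h
      exact hw (hle (fun i => decide (T i)) w i (by simp [hT]) (by simpa using h))
  · by_cases hT : T i
    · exact hT _
    cases ha : a i
    · rw [hg _ i (by simp [ha, hT]), ha]; rfl
    · exact hle (fun _ => true) _ i (by simp [ha, hT]) ha

theorem biasedPRB_eq_prodBox (n : ℕ) (δ : ℝ) : biasedPRB n δ = prodBox n (biasedPRB1 δ) := rfl

theorem biasedPRB1_nonneg {δ : ℝ} (hδ0 : 0 ≤ δ) (hδ : δ ≤ 1 / 3) (x y u v : Bool) :
    0 ≤ biasedPRB1 δ x y u v := by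
  cases x <;> cases y <;> cases u <;> cases v <;> simp [biasedPRB1] <;> linarith

theorem sum_biasedPRB1 (δ : ℝ) (u v : Bool) : ∑ x, ∑ y, biasedPRB1 δ x y u v = 1 := by
  cases u <;> cases v <;> simp [biasedPRB1] <;> ring

theorem nonSignalling_biasedPRB (n : ℕ) (δ : ℝ) : NonSignalling (biasedPRB n δ) :=
  nonSignalling_prodBox
    (fun y v u u' => by cases y <;> cases v <;> cases u <;> cases u' <;> simp [biasedPRB1] <;> ring)
    (fun x u v v' => by cases x <;> cases u <;> cases v <;> cases v' <;> simp [biasedPRB1] <;> ring)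

def prbAlice : Fin 3 → Bool → Bool := ![id, fun _ => false, not]

def prbBob : Fin 3 → Bool → Bool := ![not, id, fun _ => true]

noncomputable def localPRB1 (x y u v : Bool) : ℝ :=
  ∑ k, (1 / 3 : ℝ) * if x = prbAlice k u ∧ y = prbBob k v then 1 else 0

theorem smul_localPRB1_le {δ : ℝ} (hδ : δ ≤ 1 / 3) (x y u v : Bool) :
    3 * δ * localPRB1 x y u v ≤ biasedPRB1 δ x y u v := by
  cases x <;> cases y <;> cases u <;> cases v <;>
    simp [localPRB1, biasedPRB1, Fin.sum_univ_three, prbAlice, prbBob] <;> linarith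

theorem hasLocalPart_biasedPRB {δ : ℝ} (hδ0 : 0 ≤ δ) (hδ : δ ≤ 1 / 3) :
    HasLocalPart (biasedPRB n δ) ((3 * δ) ^ n) := by
  have h3δ : 0 ≤ 3 * δ := by linarith
  refine hasLocalPart_of_smul_le (isBox_prodBox (biasedPRB1_nonneg hδ0 hδ) (sum_biasedPRB1 δ))
    (nonSignalling_biasedPRB n δ)
    (isLocal_prodBox (fun _ => 1 / 3) (fun _ => by norm_num) (by norm_num) prbAlice prbBob)
    (pow_nonneg h3δ n) (pow_le_one₀ h3δ (by linarith)) fun x y u v => ?_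
  rw [prodBox, ← Fin.prod_const, ← prod_mul_distrib]
  exact prod_le_prod (fun i _ => mul_nonneg h3δ (sum_nonneg fun k _ => by positivity))
    fun i _ => smul_localPRB1_le hδ _ _ _ _

noncomputable def prbBellCoeff1 (x y u v : Bool) : ℝ :=
  if x = false ∧ y = true ∧ (u && v) = false then 1 else 0

theorem prbBellCoeff1_nonneg (x y u v : Bool) : 0 ≤ prbBellCoeff1 x y u v := by
  unfold prbBellCoeff1; split <;> norm_num

theorem biasedPRB1_support {δ : ℝ} {x y u v : Bool} (h : biasedPRB1 δ x y u v ≠ 0) :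
    (u = true → v = true → x ≠ y) ∧ ((u && v) = false → x = true → y = true) := by
  revert h; cases x <;> cases y <;> cases u <;> cases v <;> simp [biasedPRB1]

theorem bellValue_biasedPRB (n : ℕ) (δ : ℝ) :
    bellValue (prodBox n prbBellCoeff1) (biasedPRB n δ) = (3 * δ) ^ n := by
  rw [biasedPRB_eq_prodBox, bellValue_prodBox]
  congr 1
  simp [prbBellCoeff1, biasedPRB1]
  ring

theorem le_of_hasLocalPart_biasedPRB {δ p : ℝ} (hp : HasLocalPart (biasedPRB n δ) p) :
    p ≤ (3 * δ) ^ n := by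
  have hcoeff (x y u v : Bits n) : 0 ≤ prodBox n prbBellCoeff1 x y u v :=
    prod_nonneg fun i _ => prbBellCoeff1_nonneg _ _ _ _
  rw [← bellValue_biasedPRB n δ]
  refine le_bellValue_of_hasLocalPart hcoeff (fun f g hfg => ?_) hp
  have hsupp (u v : Bits n) (i : Fin n) :
      (u i = true → v i = true → f u i ≠ g v i) ∧
        ((u i && v i) = false → f u i = true → g v i = true) :=
    biasedPRB1_support (prod_ne_zero_iff.1 (hfg u v) i (mem_univ i))
  obtain ⟨u, v, huv⟩ :=
    exists_bell_witness f g (fun u v i => (hsupp u v i).1) (fun u v i => (hsupp u v i).2)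
  calc (1 : ℝ) = prodBox n prbBellCoeff1 (f u) (g v) u v :=
        (prod_eq_one fun i _ => by simp [prbBellCoeff1, huv i]).symm
    _ ≤ ∑ v', prodBox n prbBellCoeff1 (f u) (g v') u v' :=
        single_le_sum (f := fun v' => prodBox n prbBellCoeff1 (f u) (g v') u v')
          (fun v' _ => hcoeff _ _ _ _) (mem_univ v)
    _ ≤ ∑ u', ∑ v', prodBox n prbBellCoeff1 (f u') (g v') u' v' :=
        single_le_sum
          (f := fun u' => ∑ v', prodBox n prbBellCoeff1 (f u') (g v') u' v')
          (fun u' _ => sum_nonneg fun v' _ => hcoeff _ _ _ _)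
          (mem_univ u)

theorem stmt17_general (n : ℕ) (δ : ℝ) (hδ0 : 0 ≤ δ) (hδ : δ ≤ 1 / 3) :
    localPart (biasedPRB n δ) = (3 * δ) ^ n :=
  localPart_eq_of_isGreatest
    ⟨hasLocalPart_biasedPRB hδ0 hδ, fun _ hp => le_of_hasLocalPart_biasedPRB hp⟩

/-- the local part of n maximally biased δ-PRBs is `(3δ)ⁿ`. -/
theorem stmt17 (n : ℕ) (hn : 1 ≤ n) (δ : ℝ) (hδ0 : 0 ≤ δ) (hδ : δ ≤ 1 / 3) :
    localPart (biasedPRB n δ) = (3 * δ) ^ n :=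
  stmt17_general n δ hδ0 hδ
end
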